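/- Let n ≥ 1, let Pₙ be the path graph on vertices Δ = {α₁,…,αₙ}, and let J₀ ⊆ Δ. Then the lattice Λ*(Pₙ,J₀) is supersolvable if and only if every connected component of J₀ (in Pₙ) is either a singleton {αᵢ} or a connected subset of Δ containing an end node of Pₙ. -/

import Mathlib

open SimpleGraph Finset

/-- `ReachIn G U a b` : `b` is reachable from `a` within the subgraph of `G`
induced on the vertex set `U`. -/
def ReachIn {n : ℕ} (G : SimpleGraph (Fin n)) (U : Finset (Fin n)) (a b : Fin n) : Prop :=
  Relation.ReflTransGen (fun x y => G.Adj x y ∧ x ∈ U ∧ y ∈ U) a b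

/-- `U` is admissible (with respect to `J₀`) if no connected component of the
subgraph of `G` induced on `U` is entirely contained in `J₀`: every component
contains a vertex outside `J₀`. -/
def Admissible {n : ℕ} (G : SimpleGraph (Fin n)) (J₀ U : Finset (Fin n)) : Prop :=
  ∀ a ∈ U, ∃ b, ReachIn G U a b ∧ b ∉ J₀

/-- A subset `A` is connected if the induced subgraph on `A` is connected. -/
def ConnIn {n : ℕ} (G : SimpleGraph (Fin n)) (A : Finset (Fin n)) : Prop :=
  ∀ a ∈ A, ∀ b ∈ A, ReachIn G A a b

theorem ReachIn.mono {n : ℕ} {G : SimpleGraph (Fin n)} {U V : Finset (Fin n)} (h : U ⊆ V)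
    {a b : Fin n} (hr : ReachIn G U a b) : ReachIn G V a b :=
  by
    unfold ReachIn at *
    induction hr with
    | refl => exact Relation.ReflTransGen.refl
    | tail _ hxy ih => exact ih.tail ⟨hxy.1, h hxy.2.1, h hxy.2.2⟩

theorem admissible_empty {n : ℕ} (G : SimpleGraph (Fin n)) (J₀ : Finset (Fin n)) :
    Admissible G J₀ ∅ := fun a ha => absurd ha (Finset.notMem_empty a)

theorem admissible_union {n : ℕ} {G : SimpleGraph (Fin n)} {J₀ U V : Finset (Fin n)}
    (hU : Admissible G J₀ U) (hV : Admissible G J₀ V) : Admissible G J₀ (U ∪ V) := by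
  intro a ha
  rcases Finset.mem_union.mp ha with h | h
  · obtain ⟨b, hb, hbJ⟩ := hU a h
    exact ⟨b, hb.mono Finset.subset_union_left, hbJ⟩
  · obtain ⟨b, hb, hbJ⟩ := hV a h
    exact ⟨b, hb.mono Finset.subset_union_right, hbJ⟩

/-- `Λ*(G, J₀)` : the poset of admissible subsets, ordered by inclusion. -/
def CrossSection {n : ℕ} (G : SimpleGraph (Fin n)) (J₀ : Finset (Fin n)) : Type :=
  {U : Finset (Fin n) // Admissible G J₀ U}

namespace CrossSection

variable {n : ℕ} {G : SimpleGraph (Fin n)} {J₀ : Finset (Fin n)}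

instance : PartialOrder (CrossSection G J₀) :=
  inferInstanceAs (PartialOrder {U : Finset (Fin n) // Admissible G J₀ U})

instance : DecidableEq (CrossSection G J₀) :=
  inferInstanceAs (DecidableEq {U : Finset (Fin n) // Admissible G J₀ U})

noncomputable instance : Fintype (CrossSection G J₀) :=
  Fintype.ofInjective (Subtype.val : CrossSection G J₀ → Finset (Fin n)) Subtype.val_injective

open Classical in
/-- The underlying set of the meet of two admissible sets: the largest admissible
subset contained in the intersection. -/
noncomputable def meetFinset (G : SimpleGraph (Fin n)) (J₀ : Finset (Fin n))
    (U V : Finset (Fin n)) : Finset (Fin n) :=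
  ((U ∩ V).powerset.filter (fun W => Admissible G J₀ W)).sup id

theorem admissible_sup {s : Finset (Finset (Fin n))}
    (h : ∀ W ∈ s, Admissible G J₀ W) : Admissible G J₀ (s.sup id) :=
  Finset.sup_induction (by simpa using admissible_empty G J₀)
    (fun a ha b hb => by simpa using admissible_union ha hb) h

theorem admissible_meetFinset (G : SimpleGraph (Fin n)) (J₀ U V : Finset (Fin n)) :
    Admissible G J₀ (meetFinset G J₀ U V) := by
  classical
  exact admissible_sup (fun W hW => (Finset.mem_filter.mp hW).2)

theorem meetFinset_subset_left (G : SimpleGraph (Fin n)) (J₀ U V : Finset (Fin n)) :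
    meetFinset G J₀ U V ≤ U := by
  classical
  unfold meetFinset
  refine Finset.sup_le (fun W hW => ?_)
  have := Finset.mem_powerset.mp (Finset.mem_filter.mp hW).1
  exact fun x hx => (Finset.mem_inter.mp (this hx)).1

theorem meetFinset_subset_right (G : SimpleGraph (Fin n)) (J₀ U V : Finset (Fin n)) :
    meetFinset G J₀ U V ≤ V := by
  classical
  unfold meetFinset
  refine Finset.sup_le (fun W hW => ?_)
  have := Finset.mem_powerset.mp (Finset.mem_filter.mp hW).1
  exact fun x hx => (Finset.mem_inter.mp (this hx)).2

theorem subset_meetFinset {G : SimpleGraph (Fin n)} {J₀ U V W : Finset (Fin n)}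
    (hW : Admissible G J₀ W) (h1 : W ⊆ U) (h2 : W ⊆ V) : W ≤ meetFinset G J₀ U V := by
  classical
  unfold meetFinset
  exact Finset.le_sup (f := id)
    (Finset.mem_filter.mpr ⟨Finset.mem_powerset.mpr (Finset.subset_inter h1 h2), hW⟩)

noncomputable instance : Lattice (CrossSection G J₀) :=
  { (inferInstance : PartialOrder (CrossSection G J₀)) with
    sup := fun U V => ⟨U.1 ∪ V.1, admissible_union U.2 V.2⟩
    le_sup_left := fun U V => show U.1 ⊆ U.1 ∪ V.1 from Finset.subset_union_left
    le_sup_right := fun U V => show V.1 ⊆ U.1 ∪ V.1 from Finset.subset_union_right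
    sup_le := fun U V W h1 h2 => show U.1 ∪ V.1 ⊆ W.1 from Finset.union_subset h1 h2
    inf := fun U V => ⟨meetFinset G J₀ U.1 V.1, admissible_meetFinset G J₀ U.1 V.1⟩
    inf_le_left := fun U V => meetFinset_subset_left G J₀ U.1 V.1
    inf_le_right := fun U V => meetFinset_subset_right G J₀ U.1 V.1
    le_inf := fun W U V h1 h2 => subset_meetFinset W.2 h1 h2 }

instance : OrderBot (CrossSection G J₀) where
  bot := ⟨∅, admissible_empty G J₀⟩
  bot_le := fun U => show (∅ : Finset (Fin n)) ⊆ U.1 from Finset.empty_subset _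

@[simp] theorem sup_val (U V : CrossSection G J₀) : (U ⊔ V).1 = U.1 ∪ V.1 := rfl

@[simp] theorem inf_val (U V : CrossSection G J₀) : (U ⊓ V).1 = meetFinset G J₀ U.1 V.1 := rfl

end CrossSection

/-- A finite lattice is supersolvable if it has a maximal chain `Γ` such that for
every chain `C`, the sublattice generated by `Γ ∪ C` is distributive. -/
def Supersolvable (α : Type*) [Lattice α] : Prop :=
  ∃ Γ : Set α, IsMaxChain (· ≤ ·) Γ ∧
    ∀ C : Set α, IsChain (· ≤ ·) C →
      ∀ x ∈ latticeClosure (Γ ∪ C), ∀ y ∈ latticeClosure (Γ ∪ C),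
        ∀ z ∈ latticeClosure (Γ ∪ C), x ⊓ (y ⊔ z) = (x ⊓ y) ⊔ (x ⊓ z)


/-!
On a path, a set is admissible exactly when each of its vertices is joined, by an interval
inside the set, to a vertex outside `J₀`. If every component of `J₀` is a singleton or
contains an end node, the vertices can be ordered so that the key decreases along the
interval from any vertex to its nearest such witness; the initial segments of this order then
form a maximal chain whose members meet every admissible set in an admissible set, and the
sublattice it generates together with any chain is a lattice of sets under `∩` and `∪`.
Otherwise a component of `J₀` with at least two vertices, bounded by `p` and `q` outside `J₀`,
defeats every maximal chain: its members acquire the vertices between `p` and `q` one at a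
time, and two nested intervals ending at `p` or `q` then break distributivity.
-/

theorem ReachIn.symm {n : ℕ} {G : SimpleGraph (Fin n)} {U : Finset (Fin n)} {a b : Fin n}
    (h : ReachIn G U a b) : ReachIn G U b a := by
  induction h with
  | refl => exact .refl
  | tail _ hxy ih => exact .head ⟨hxy.1.symm, hxy.2.2, hxy.2.1⟩ ih

namespace CrossSection

variable {n : ℕ} {G : SimpleGraph (Fin n)} {J₀ : Finset (Fin n)}

open Classical in
noncomputable instance : OrderTop (CrossSection G J₀) where
  top := ⟨(univ.filter (Admissible G J₀)).sup id, admissible_sup fun _ hW => (mem_filter.mp hW).2⟩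
  le_top x := show x.1 ⊆ _ from le_sup (f := id) (mem_filter.mpr ⟨mem_univ _, x.2⟩)

theorem inf_val_of_admissible {x y : CrossSection G J₀} (h : Admissible G J₀ (x.1 ∩ y.1)) :
    (x ⊓ y).1 = x.1 ∩ y.1 :=
  subset_antisymm (subset_inter (inf_le_left (a := x)) (inf_le_right (a := x)))
    (subset_meetFinset h inter_subset_left inter_subset_right)

end CrossSection

def IsUnionOf {α : Type*} (T : Set (Finset α)) (w : Finset α) : Prop :=
  ∀ v ∈ w, ∃ s ∈ T, v ∈ s ∧ s ⊆ w

namespace IsUnionOf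

variable {α : Type*} {T : Set (Finset α)} {s w w' : Finset α}

theorem of_mem (hs : s ∈ T) : IsUnionOf T s := fun _ hv => ⟨s, hs, hv, subset_rfl⟩

theorem union [DecidableEq α] (hw : IsUnionOf T w) (hw' : IsUnionOf T w') :
    IsUnionOf T (w ∪ w') := by
  intro v hv
  rcases mem_union.1 hv with hv | hv
  · obtain ⟨s, hs, hvs, hsw⟩ := hw v hv
    exact ⟨s, hs, hvs, hsw.trans subset_union_left⟩
  · obtain ⟨s, hs, hvs, hsw⟩ := hw' v hv
    exact ⟨s, hs, hvs, hsw.trans subset_union_right⟩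

theorem inter [DecidableEq α] (hT : ∀ s ∈ T, ∀ t ∈ T, s ∩ t ∈ T) (hw : IsUnionOf T w)
    (hw' : IsUnionOf T w') : IsUnionOf T (w ∩ w') := by
  intro v hv
  obtain ⟨s, hs, hvs, hsw⟩ := hw v (mem_of_mem_inter_left hv)
  obtain ⟨s', hs', hvs', hsw'⟩ := hw' v (mem_of_mem_inter_right hv)
  exact ⟨s ∩ s', hT s hs s' hs', mem_inter.2 ⟨hvs, hvs'⟩, inter_subset_inter hsw hsw'⟩

theorem admissible {n : ℕ} {G : SimpleGraph (Fin n)} {J₀ w : Finset (Fin n)}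
    {T : Set (Finset (Fin n))} (hT : ∀ s ∈ T, Admissible G J₀ s) (hw : IsUnionOf T w) :
    Admissible G J₀ w := by
  intro a ha
  obtain ⟨s, hs, has, hsw⟩ := hw a ha
  obtain ⟨b, hab, hb⟩ := hT s hs a has
  exact ⟨b, hab.mono hsw, hb⟩

end IsUnionOf

namespace CrossSection

variable {n : ℕ} {G : SimpleGraph (Fin n)} {J₀ : Finset (Fin n)} {T : Set (Finset (Fin n))}

theorem inf_val_of_isUnionOf (hadm : ∀ s ∈ T, Admissible G J₀ s)
    (hinter : ∀ s ∈ T, ∀ t ∈ T, s ∩ t ∈ T) {x y : CrossSection G J₀}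
    (hx : IsUnionOf T x.1) (hy : IsUnionOf T y.1) : (x ⊓ y).1 = x.1 ∩ y.1 :=
  inf_val_of_admissible ((hx.inter hinter hy).admissible hadm)

theorem inf_sup_eq_of_isUnionOf (hadm : ∀ s ∈ T, Admissible G J₀ s)
    (hinter : ∀ s ∈ T, ∀ t ∈ T, s ∩ t ∈ T) {x y z : CrossSection G J₀}
    (hx : IsUnionOf T x.1) (hy : IsUnionOf T y.1) (hz : IsUnionOf T z.1) :
    x ⊓ (y ⊔ z) = x ⊓ y ⊔ x ⊓ z := by
  apply Subtype.ext
  rw [inf_val_of_isUnionOf hadm hinter hx (hy.union hz), sup_val, sup_val,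
    inf_val_of_isUnionOf hadm hinter hx hy, inf_val_of_isUnionOf hadm hinter hx hz,
    inter_union_distrib_left]

theorem _root_.IsChain.exists_val_inter_eq {A : Set (CrossSection G J₀)}
    (hA : IsChain (· ≤ ·) A) {x y : CrossSection G J₀} (hx : x ∈ A) (hy : y ∈ A) :
    ∃ z ∈ A, x.1 ∩ y.1 = z.1 :=
  (hA.total hx hy).elim (fun h => ⟨x, hx, inter_eq_left.2 h⟩)
    (fun h => ⟨y, hy, inter_eq_right.2 h⟩)

/-- The sublattice generated by `Γ` and a chain `C` consists of unions of sets `g ∩ c` with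
`g ∈ Γ` and `c ∈ C ∪ {⊤}`; on such unions meets are intersections. -/
theorem supersolvable_of_isMaxChain {Γ : Set (CrossSection G J₀)}
    (hΓ : IsMaxChain (· ≤ ·) Γ)
    (hinter : ∀ g ∈ Γ, ∀ x : CrossSection G J₀, Admissible G J₀ (g.1 ∩ x.1)) :
    Supersolvable (CrossSection G J₀) := by
  refine ⟨Γ, hΓ, fun C hC => ?_⟩
  have hD : IsChain (· ≤ ·) (insert ⊤ C) := hC.insert fun _ _ _ => Or.inr le_top
  let T : Set (Finset (Fin n)) := Set.image2 (fun g c => g.1 ∩ c.1) Γ (insert ⊤ C)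
  have hadm : ∀ s ∈ T, Admissible G J₀ s := by
    rintro _ ⟨g, hg, c, -, rfl⟩
    exact hinter g hg c
  have hinter : ∀ s ∈ T, ∀ t ∈ T, s ∩ t ∈ T := by
    rintro _ ⟨g, hg, c, hc, rfl⟩ _ ⟨g', hg', c', hc', rfl⟩
    obtain ⟨g'', hg'', hgg⟩ := hΓ.1.exists_val_inter_eq hg hg'
    obtain ⟨c'', hc'', hcc⟩ := hD.exists_val_inter_eq hc hc'
    refine ⟨g'', hg'', c'', hc'', ?_⟩
    change g''.1 ∩ c''.1 = g.1 ∩ c.1 ∩ (g'.1 ∩ c'.1)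
    rw [← hgg, ← hcc, inter_inter_inter_comm]
  let S : Set (CrossSection G J₀) := {w | IsUnionOf T w.1}
  have hS : IsSublattice S :=
    ⟨fun x hx y hy => show IsUnionOf T (x ⊔ y).1 from hx.union hy,
      fun x hx y hy => show IsUnionOf T (x ⊓ y).1 by
        rw [inf_val_of_isUnionOf hadm hinter hx hy]; exact hx.inter hinter hy⟩
  have hΓCS : Γ ∪ C ⊆ S := by
    rintro x (hx | hx)
    · exact IsUnionOf.of_mem ⟨x, hx, ⊤, Set.mem_insert _ _, inter_eq_left.2 (le_top : x ≤ ⊤)⟩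
    · exact IsUnionOf.of_mem ⟨⊤, hΓ.top_mem, x, Set.mem_insert_of_mem _ hx,
        inter_eq_right.2 (le_top : x ≤ ⊤)⟩
  intro x hx y hy z hz
  have hclosure := latticeClosure_min hΓCS hS
  exact inf_sup_eq_of_isUnionOf hadm hinter (hclosure hx) (hclosure hy) (hclosure hz)

end CrossSection

section PathGraph

variable {n : ℕ} {J₀ U : Finset (Fin n)} {a b e : Fin n}

theorem reachIn_pathGraph_of_Icc_subset (hab : a ≤ b) (h : Icc a b ⊆ U) :
    ReachIn (pathGraph n) U a b := by
  obtain ⟨k, hk⟩ : ∃ k, b.val = a.val + k := ⟨b - a, by omega⟩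
  induction k generalizing b with
  | zero => exact (show a = b by omega) ▸ .refl
  | succ k ih =>
    let b' : Fin n := ⟨a + k, by omega⟩
    have hb'b : b' ≤ b := by simp only [Fin.le_def, b']; omega
    refine (ih (by simp only [Fin.le_def, b']; omega) ((Icc_subset_Icc_right hb'b).trans h)
      rfl).tail ⟨pathGraph_adj.2 (Or.inl (by simp only [b']; omega)), h ?_, h ?_⟩
    · simp only [mem_Icc, Fin.le_def, b']; omega
    · exact right_mem_Icc.2 hab

theorem reachIn_pathGraph_iff (ha : a ∈ U) :
    ReachIn (pathGraph n) U a b ↔ uIcc a b ⊆ U := by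
  constructor
  · intro h
    induction h with
    | refl => simpa using ha
    | @tail x y _ hxy ih =>
      obtain ⟨hadj, -, hy⟩ := hxy
      intro c hc
      by_cases hcy : c = y
      · exact hcy ▸ hy
      · rw [pathGraph_adj] at hadj
        refine ih ?_
        rw [mem_uIcc'] at hc ⊢
        omega
  · intro h
    rcases le_total a b with hab | hba
    · exact reachIn_pathGraph_of_Icc_subset hab (by rwa [← uIcc_of_le hab])
    · exact (reachIn_pathGraph_of_Icc_subset hba (by rwa [← uIcc_of_ge hba])).symm

theorem admissible_pathGraph_iff :
    Admissible (pathGraph n) J₀ U ↔ ∀ a ∈ U, ∃ b ∉ J₀, uIcc a b ⊆ U := by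
  refine forall₂_congr fun a ha => ⟨fun ⟨b, hab, hb⟩ => ?_, fun ⟨b, hb, hab⟩ => ?_⟩
  · exact ⟨b, hb, (reachIn_pathGraph_iff ha).1 hab⟩
  · exact ⟨b, (reachIn_pathGraph_iff ha).2 hab, hb⟩

theorem admissible_pathGraph_uIcc (he : e ∉ J₀) : Admissible (pathGraph n) J₀ (uIcc a e) :=
  admissible_pathGraph_iff.2 fun _ hc => ⟨e, he, uIcc_subset_uIcc_right hc⟩

end PathGraph

section Witness

variable {n : ℕ} {J₀ U V : Finset (Fin n)} {a b : Fin n}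

/-- The distance from `a` to a nearest vertex outside `J₀` that `a` reaches inside `V`
(`0` when there is none). -/
noncomputable def witnessDist (J₀ V : Finset (Fin n)) (a : Fin n) : ℕ :=
  sInf {k | ∃ b ∉ J₀, uIcc a b ⊆ V ∧ Nat.dist a b = k}

theorem witnessDist_le (hb : b ∉ J₀) (hab : uIcc a b ⊆ V) :
    witnessDist J₀ V a ≤ Nat.dist a b :=
  Nat.sInf_le ⟨b, hb, hab, rfl⟩

theorem exists_witnessDist_eq (hV : Admissible (pathGraph n) J₀ V) (ha : a ∈ V) :
    ∃ b ∉ J₀, uIcc a b ⊆ V ∧ Nat.dist a b = witnessDist J₀ V a := by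
  obtain ⟨b, hb, hab⟩ := admissible_pathGraph_iff.1 hV a ha
  exact Nat.sInf_mem (s := {k | ∃ b ∉ J₀, uIcc a b ⊆ V ∧ Nat.dist a b = k})
    ⟨_, b, hb, hab, rfl⟩

theorem exists_nearest_witness (hV : Admissible (pathGraph n) J₀ V) (ha : a ∈ V) :
    ∃ b ∉ J₀, uIcc a b ⊆ V ∧ ∀ c ∈ uIcc a b, c ≠ b → c ∈ J₀ := by
  obtain ⟨b, hb, hab, hdist⟩ := exists_witnessDist_eq hV ha
  refine ⟨b, hb, hab, fun c hc hcb => ?_⟩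
  by_contra hcJ
  have := witnessDist_le hcJ ((uIcc_subset_uIcc_left hc).trans hab)
  rw [mem_uIcc'] at hc
  simp only [Nat.dist] at hdist this
  omega

/-- Removing a vertex of `V \ U` that is farthest from its nearest witness cannot cut any
other vertex off from its own nearest witness. -/
theorem exists_admissible_erase (hV : Admissible (pathGraph n) J₀ V)
    (hU : Admissible (pathGraph n) J₀ U) (hUV : U ⊂ V) :
    ∃ v ∈ V \ U, Admissible (pathGraph n) J₀ (V.erase v) := by
  obtain ⟨v, hv, hvmax⟩ := (V \ U).exists_max_image (witnessDist J₀ V)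
    (sdiff_nonempty.2 hUV.not_subset)
  obtain ⟨hvV, hvU⟩ := mem_sdiff.1 hv
  refine ⟨v, hv, admissible_pathGraph_iff.2 fun a ha => ?_⟩
  obtain ⟨hav, haV⟩ := mem_erase.1 ha
  by_cases haU : a ∈ U
  · obtain ⟨b, hb, hab⟩ := admissible_pathGraph_iff.1 hU a haU
    exact ⟨b, hb, fun c hc => mem_erase.2 ⟨ne_of_mem_of_not_mem (hab hc) hvU, hUV.subset (hab hc)⟩⟩
  · obtain ⟨b, hb, hab, hdist⟩ := exists_witnessDist_eq hV haV
    refine ⟨b, hb, fun c hc => mem_erase.2 ⟨?_, hab hc⟩⟩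
    rintro rfl
    have hva := hvmax a (mem_sdiff.2 ⟨haV, haU⟩)
    have hvb := witnessDist_le hb ((uIcc_subset_uIcc_right hc).trans hab)
    rw [mem_uIcc'] at hc
    simp only [Nat.dist] at hdist hvb
    omega

theorem CrossSection.exists_val_eq_insert_of_covBy {x y : CrossSection (pathGraph n) J₀}
    (h : x ⋖ y) : ∃ v ∉ x.1, y.1 = insert v x.1 := by
  obtain ⟨v, hv, hadm⟩ := exists_admissible_erase y.2 x.2 (Subtype.coe_lt_coe.2 h.lt)
  obtain ⟨hvy, hvx⟩ := mem_sdiff.1 hv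
  let w : CrossSection (pathGraph n) J₀ := ⟨y.1.erase v, hadm⟩
  have hxw : x ≤ w := fun u hu => mem_erase.2 ⟨ne_of_mem_of_not_mem hu hvx, h.le hu⟩
  have hwy : w < y := Subtype.coe_lt_coe.1 (erase_ssubset hvy)
  have : x = w := hxw.eq_of_not_lt fun hxw' => h.2 hxw' hwy
  exact ⟨v, hvx, by rw [this, insert_erase hvy]⟩

end Witness

theorem Finset.exists_eq_filter_lt_of_forall_comparable {α : Type*} [DecidableEq α] {f : α → ℕ}
    (hf : Function.Injective f) {A x : Finset α} (hxA : x ⊆ A)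
    (h : ∀ t, A.filter (f · < t) ⊆ x ∨ x ⊆ A.filter (f · < t)) :
    ∃ t, x = A.filter (f · < t) := by
  by_cases hx : A ⊆ x
  · refine ⟨A.sup f + 1, ?_⟩
    rw [filter_true_of_mem fun v hv => Nat.lt_succ_of_le (le_sup hv)]
    exact subset_antisymm hxA hx
  obtain ⟨v, hv, hvmin⟩ := (A \ x).exists_min_image f (sdiff_nonempty.2 hx)
  obtain ⟨hvA, hvx⟩ := mem_sdiff.1 hv
  have hsub : x ⊆ A.filter (f · < f v + 1) :=
    (h (f v + 1)).resolve_left fun hsub => hvx (hsub (mem_filter.2 ⟨hvA, lt_add_one _⟩))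
  refine ⟨f v, subset_antisymm (fun u hu => ?_) (fun u hu => ?_)⟩
  · have hle := Nat.lt_succ_iff.1 (mem_filter.1 (hsub hu)).2
    exact mem_filter.2 ⟨hxA hu, hle.lt_of_ne fun he => hvx (hf he ▸ hu)⟩
  · obtain ⟨huA, hlt⟩ := mem_filter.1 hu
    by_contra hux
    exact (hvmin u (mem_sdiff.2 ⟨huA, hux⟩)).not_gt hlt

section Forward

variable {n : ℕ} {J₀ U : Finset (Fin n)} {a b c : Fin n}

/-- `Iic c ⊆ J₀` (resp. `Ici c ⊆ J₀`) says that the component of `c` in `J₀` contains the end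
node `α₁` (resp. `αₙ`). -/
def ComponentsIsolatedOrAtEnds (J₀ : Finset (Fin n)) : Prop :=
  ∀ c ∈ J₀, (∀ d, ReachIn (pathGraph n) J₀ c d → d = c) ∨ Iic c ⊆ J₀ ∨ Ici c ⊆ J₀

/-- A linear order of the vertices whose initial segments cut every admissible set into an
admissible set: vertices outside `J₀` first, then the isolated vertices of `J₀`, then the
components of `J₀` through `α₁` and last those through `αₙ`, each of these starting next to
its boundary and moving towards the end node. -/
def pathKey (J₀ : Finset (Fin n)) (v : Fin n) : ℕ :=
  if v ∉ J₀ then v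
  else if Iic v ⊆ J₀ then 3 * n - v
  else if Ici v ⊆ J₀ then 4 * n + v
  else n + v

theorem pathKey_injective : Function.Injective (pathKey J₀) := by
  intro v w h
  have := v.isLt
  have := w.isLt
  unfold pathKey at h
  split_ifs at h <;> omega

theorem pathKey_of_notMem (ha : a ∉ J₀) : pathKey J₀ a = a := if_pos ha

theorem le_pathKey_of_mem (ha : a ∈ J₀) : n ≤ pathKey J₀ a := by
  have := a.isLt
  unfold pathKey
  split_ifs <;> omega

theorem pathKey_of_Iic_subset (h : Iic a ⊆ J₀) : pathKey J₀ a = 3 * n - a := by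
  rw [pathKey, if_neg (not_not.2 (h (mem_Iic.2 le_rfl))), if_pos h]

theorem pathKey_of_Ici_subset (h : Ici a ⊆ J₀) (h' : ¬ Iic a ⊆ J₀) :
    pathKey J₀ a = 4 * n + a := by
  rw [pathKey, if_neg (not_not.2 (h (mem_Ici.2 le_rfl))), if_neg h', if_pos h]

/-- A vertex strictly between `a` and its nearest witness `b` is not isolated in `J₀`, so its
component reaches the end of the path on the side away from `b`. -/
theorem pathKey_le_of_mem_uIcc (hJ₀ : ComponentsIsolatedOrAtEnds J₀) (hb : b ∉ J₀)
    (hab : ∀ c ∈ uIcc a b, c ≠ b → c ∈ J₀) (hc : c ∈ uIcc a b) :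
    pathKey J₀ c ≤ pathKey J₀ a := by
  by_cases hca : c = a
  · rw [hca]
  have ha : a ∈ J₀ := hab a left_mem_uIcc fun h => hca (by rw [mem_uIcc'] at hc; omega)
  by_cases hcb : c = b
  · rw [hcb, pathKey_of_notMem hb]
    exact (b.isLt.trans_le (le_pathKey_of_mem ha)).le
  have hcJ : c ∈ J₀ := hab c hc hcb
  have hreach : ReachIn (pathGraph n) J₀ c a := by
    refine (reachIn_pathGraph_iff hcJ).2 fun d hd => hab d ?_ ?_
    · exact uIcc_subset_uIcc_left hc (uIcc_comm c a ▸ hd)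
    · rintro rfl
      rw [mem_uIcc'] at hc hd
      omega
  have hends : Iic c ⊆ J₀ ∨ Ici c ⊆ J₀ :=
    (hJ₀ c hcJ).resolve_left fun h => hca (h a hreach).symm
  rw [mem_uIcc'] at hc
  by_cases hlow : Iic c ⊆ J₀
  · have hac : a < c := by
      have : ¬ b ≤ c := fun h => hb (hlow (mem_Iic.2 h))
      omega
    rw [pathKey_of_Iic_subset hlow, pathKey_of_Iic_subset ((Iic_subset_Iic.2 hac.le).trans hlow)]
    omega
  · have hhigh := hends.resolve_left hlow
    have hbc : b < c := not_le.1 fun h => hb (hhigh (mem_Ici.2 h))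
    have hca' : c < a := by omega
    have hlowa : ¬ Iic a ⊆ J₀ := fun h => hb (h (mem_Iic.2 (hbc.trans hca').le))
    rw [pathKey_of_Ici_subset hhigh hlow,
      pathKey_of_Ici_subset ((Ici_subset_Ici.2 hca'.le).trans hhigh) hlowa]
    omega

theorem admissible_filter_pathKey_lt (hJ₀ : ComponentsIsolatedOrAtEnds J₀)
    (hU : Admissible (pathGraph n) J₀ U) (t : ℕ) :
    Admissible (pathGraph n) J₀ (U.filter (pathKey J₀ · < t)) := by
  refine admissible_pathGraph_iff.2 fun a ha => ?_
  obtain ⟨haU, hat⟩ := mem_filter.1 ha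
  obtain ⟨b, hb, hbU, hab⟩ := exists_nearest_witness hU haU
  exact ⟨b, hb, fun c hc =>
    mem_filter.2 ⟨hbU hc, (pathKey_le_of_mem_uIcc hJ₀ hb hab hc).trans_lt hat⟩⟩

theorem supersolvable_of_componentsIsolatedOrAtEnds (hJ₀ : ComponentsIsolatedOrAtEnds J₀) :
    Supersolvable (CrossSection (pathGraph n) J₀) := by
  let top : CrossSection (pathGraph n) J₀ := ⊤
  let g : ℕ → CrossSection (pathGraph n) J₀ := fun t =>
    ⟨top.1.filter (pathKey J₀ · < t), admissible_filter_pathKey_lt hJ₀ top.2 t⟩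
  have hg : Monotone g := fun s t hst v hv => by
    simp only [g, mem_filter] at hv ⊢
    exact ⟨hv.1, hv.2.trans_le hst⟩
  refine CrossSection.supersolvable_of_isMaxChain (Γ := Set.range g)
    ⟨hg.isChain_range, fun Γ' hΓ' hsub => hsub.antisymm fun x hx => ?_⟩ ?_
  · obtain ⟨t, ht⟩ := exists_eq_filter_lt_of_forall_comparable pathKey_injective
      (le_top : x ≤ top) fun t => hΓ'.total (hsub ⟨t, rfl⟩) hx
    exact ⟨t, Subtype.ext ht.symm⟩
  · rintro _ ⟨t, rfl⟩ x
    convert admissible_filter_pathKey_lt hJ₀ x.2 t using 1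
    ext v
    simp only [g, mem_inter, mem_filter]
    have : v ∈ x.1 → v ∈ top.1 := fun hv => (le_top : x ≤ top) hv
    tauto

end Forward

section Converse

variable {n : ℕ} {J₀ : Finset (Fin n)}

theorem Flag.exists_le_covBy_of_lt {α : Type*} [PartialOrder α] [Finite α] (s : Flag α)
    {a b : α} (ha : a ∈ s) (hb : b ∈ s) (hab : a < b) : ∃ c ∈ s, a ≤ c ∧ c ⋖ b := by
  obtain ⟨c, hac, hcb⟩ := _root_.exists_le_covBy_of_lt (α := s) (a := ⟨a, ha⟩) (b := ⟨b, hb⟩) hab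
  exact ⟨c, c.2, hac, Flag.coe_covBy_coe.2 hcb⟩

/-- Consecutive members of a maximal chain differ in one vertex, so the first member of the
chain that meets `A` meets it in a single vertex. -/
theorem CrossSection.exists_mem_val_inter_eq_singleton {Γ : Set (CrossSection (pathGraph n) J₀)}
    (hΓ : IsMaxChain (· ≤ ·) Γ) {A : Finset (Fin n)}
    (hA : ((⊤ : CrossSection (pathGraph n) J₀).1 ∩ A).Nonempty) :
    ∃ g ∈ Γ, ∃ v, g.1 ∩ A = {v} := by
  obtain ⟨g, hg⟩ := (Set.toFinite {x ∈ Γ | (x.1 ∩ A).Nonempty}).exists_minimal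
    ⟨⊤, hΓ.top_mem, hA⟩
  obtain ⟨⟨hgΓ, hgA⟩, hgmin⟩ := hg
  have hbot : ⊥ < g := bot_lt_iff_ne_bot.2 fun h => by
    rw [h] at hgA
    exact not_nonempty_empty hgA
  obtain ⟨c, hcΓ, -, hcg⟩ :=
    Flag.exists_le_covBy_of_lt (.ofIsMaxChain Γ hΓ) hΓ.bot_mem hgΓ hbot
  have hcA : c.1 ∩ A = ∅ := not_nonempty_iff_eq_empty.1 fun hcA =>
    hcg.lt.not_ge (hgmin ⟨hcΓ, hcA⟩ hcg.le)
  obtain ⟨v, -, hgv⟩ := exists_val_eq_insert_of_covBy hcg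
  rw [hgv] at hgA
  have hvA : v ∈ A := by
    by_contra hvA
    rw [insert_inter_of_notMem hvA, hcA] at hgA
    exact not_nonempty_empty hgA
  exact ⟨g, hgΓ, v, by rw [hgv, insert_inter_of_mem hvA, hcA, insert_empty]⟩

theorem exists_adj_mem_uIcc {p q v : Fin n} (hpq : p.val + 3 ≤ q.val) (hv : v ∈ Ioo p q) :
    ∃ w ∈ Ioo p q, ∃ e, (e = p ∨ e = q) ∧ (pathGraph n).Adj v w ∧ w ∈ uIcc v e := by
  rw [mem_Ioo] at hv
  by_cases hvq : v.val + 1 < q.val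
  · refine ⟨⟨v + 1, by omega⟩, ?_, q, .inr rfl, pathGraph_adj.2 (.inl rfl), ?_⟩
    · simp only [mem_Ioo, Fin.lt_def]; omega
    · simp only [mem_uIcc', Fin.le_def]; omega
  · refine ⟨⟨v - 1, by omega⟩, ?_, p, .inl rfl, pathGraph_adj.2 (.inr (by simp only; omega)), ?_⟩
    · simp only [mem_Ioo, Fin.lt_def]; omega
    · simp only [mem_uIcc', Fin.le_def]; omega

/-- With `v` the only vertex of `g ∈ Γ` inside the gap `(p, q)` and `w` its neighbour towards
the end `e` of the gap, the sets `z = [v, e] ⊇ y = [w, e]` of the chain `C = {y, z}` violate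
`z ⊓ (y ⊔ g) = (z ⊓ y) ⊔ (z ⊓ g)`: the left side is `z ∋ v`, while an admissible subset of
`z ∩ g` containing `v` would have to contain `w` as well. -/
theorem not_supersolvable_of_gap {p q : Fin n} (hpq : p.val + 3 ≤ q.val) (hp : p ∉ J₀)
    (hq : q ∉ J₀) (hJ₀ : Ioo p q ⊆ J₀) : ¬ Supersolvable (CrossSection (pathGraph n) J₀) := by
  rintro ⟨Γ, hΓ, hdistrib⟩
  let u : CrossSection (pathGraph n) J₀ :=
    ⟨univ, admissible_pathGraph_iff.2 fun _ _ => ⟨p, hp, subset_univ _⟩⟩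
  have htop : (⊤ : CrossSection (pathGraph n) J₀).1 = univ := univ_subset_iff.1 (le_top : u ≤ ⊤)
  obtain ⟨g, hg, v, hgv⟩ := CrossSection.exists_mem_val_inter_eq_singleton hΓ (A := Ioo p q)
    ⟨⟨p + 1, by omega⟩, by simp only [htop, univ_inter, mem_Ioo, Fin.lt_def]; omega⟩
  have hvg : v ∈ g.1 ∩ Ioo p q := hgv ▸ mem_singleton_self v
  obtain ⟨w, hw, e, he, hvw, hwe⟩ := exists_adj_mem_uIcc hpq (mem_inter.1 hvg).2
  have heJ : e ∉ J₀ := by rcases he with rfl | rfl <;> assumption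
  let z : CrossSection (pathGraph n) J₀ := ⟨uIcc v e, admissible_pathGraph_uIcc heJ⟩
  let y : CrossSection (pathGraph n) J₀ := ⟨uIcc w e, admissible_pathGraph_uIcc heJ⟩
  have hC : IsChain (· ≤ ·) ({y, z} : Set _) := IsChain.pair (uIcc_subset_uIcc_right hwe)
  have key := hdistrib {y, z} hC z (subset_latticeClosure (.inr (by simp)))
    y (subset_latticeClosure (.inr (by simp))) g (subset_latticeClosure (.inl hg))
  rw [pathGraph_adj] at hvw
  have hz : z ≤ y ⊔ g := fun u hu => by
    rcases eq_or_ne u v with rfl | huv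
    · exact mem_union_right _ (mem_inter.1 hvg).1
    · refine mem_union_left _ ?_
      change u ∈ uIcc v e at hu
      change u ∈ uIcc w e
      rw [mem_uIcc'] at hu hwe ⊢
      omega
  rw [inf_eq_left.2 hz] at key
  have hv : v ∈ (z ⊓ y ⊔ z ⊓ g).1 := key ▸ left_mem_uIcc
  rcases mem_union.1 hv with hvy | hvzg
  · have : v ∈ uIcc w e := (inf_le_right : z ⊓ y ≤ y) hvy
    rw [mem_uIcc'] at this hwe
    omega
  · obtain ⟨b, hb, hvb⟩ := admissible_pathGraph_iff.1 (z ⊓ g).2 v hvzg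
    have hbz : b ∈ uIcc v e := (inf_le_left : z ⊓ g ≤ z) (hvb right_mem_uIcc)
    have hbv : b ≠ v := fun h => hb (h ▸ hJ₀ (mem_inter.1 hvg).2)
    have hwb : w ∈ uIcc v b := by
      rw [mem_uIcc'] at hbz hwe ⊢
      omega
    have hwg : w ∈ g.1 ∩ Ioo p q := mem_inter.2 ⟨(inf_le_right : z ⊓ g ≤ g) (hvb hwb), hw⟩
    rw [hgv, mem_singleton] at hwg
    omega

end Converse

theorem exists_gap_of_not_isolated {n : ℕ} {J₀ : Finset (Fin n)} {a : Fin n} (ha : a ∈ J₀)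
    (hiso : ∃ b, ReachIn (pathGraph n) J₀ a b ∧ b ≠ a) (hlow : ¬ Iic a ⊆ J₀)
    (hhigh : ¬ Ici a ⊆ J₀) :
    ∃ p q : Fin n, p.val + 3 ≤ q.val ∧ p ∉ J₀ ∧ q ∉ J₀ ∧ Ioo p q ⊆ J₀ := by
  obtain ⟨b, hab, hba⟩ := hiso
  rw [reachIn_pathGraph_iff ha] at hab
  obtain ⟨p, hp, hpmax⟩ := ((Iic a).filter (· ∉ J₀)).exists_max_image id
    (by simpa [Finset.Nonempty] using not_subset.1 hlow)
  obtain ⟨q, hq, hqmin⟩ := ((Ici a).filter (· ∉ J₀)).exists_min_image id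
    (by simpa [Finset.Nonempty] using not_subset.1 hhigh)
  simp only [mem_filter, mem_Iic, mem_Ici, id] at hp hq hpmax hqmin
  have hpab : p ∉ uIcc a b := fun h => hp.2 (hab h)
  have hqab : q ∉ uIcc a b := fun h => hq.2 (hab h)
  rw [mem_uIcc'] at hpab hqab
  refine ⟨p, q, by omega, hp.2, hq.2, fun c hc => ?_⟩
  rw [mem_Ioo] at hc
  by_contra hcJ
  rcases le_total c a with hca | hac
  · exact (hpmax c ⟨hca, hcJ⟩).not_gt hc.1
  · exact (hqmin c ⟨hac, hcJ⟩).not_gt hc.2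

theorem stmt_16 (n : ℕ) (hn : 1 ≤ n) (J₀ : Finset (Fin n)) :
    Supersolvable (CrossSection (pathGraph n) J₀) ↔
      ∀ a ∈ J₀, (∀ b, ReachIn (pathGraph n) J₀ a b → b = a) ∨
        ReachIn (pathGraph n) J₀ a ⟨0, by omega⟩ ∨
        ReachIn (pathGraph n) J₀ a ⟨n - 1, by omega⟩ := by
  have hends : ∀ a ∈ J₀, (ReachIn (pathGraph n) J₀ a ⟨0, by omega⟩ ↔ Iic a ⊆ J₀) ∧
      (ReachIn (pathGraph n) J₀ a ⟨n - 1, by omega⟩ ↔ Ici a ⊆ J₀) := by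
    intro a ha
    rw [reachIn_pathGraph_iff ha, reachIn_pathGraph_iff ha]
    have h0 : uIcc a ⟨0, by omega⟩ = Iic a := by
      ext c; simp only [mem_uIcc', mem_Iic, Fin.le_def]; omega
    have hlast : uIcc a ⟨n - 1, by omega⟩ = Ici a := by
      ext c; simp only [mem_uIcc', mem_Ici, Fin.le_def]; omega
    rw [h0, hlast]
    exact ⟨Iff.rfl, Iff.rfl⟩
  constructor
  · intro hss a ha
    by_contra! h
    obtain ⟨hiso, hlow, hhigh⟩ := h
    obtain ⟨p, q, hpq, hp, hq, hJ₀⟩ := exists_gap_of_not_isolated ha hiso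
      ((hends a ha).1.not.1 hlow) ((hends a ha).2.not.1 hhigh)
    exact not_supersolvable_of_gap hpq hp hq hJ₀ hss
  · intro h
    exact supersolvable_of_componentsIsolatedOrAtEnds fun a ha =>
      (h a ha).imp_right (Or.imp (hends a ha).1.1 (hends a ha).2.1)
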